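/- (Diminishing total variation.) Let (x^i)_{i=1}^N, (v^i)_{i=1}^{N−1} be a solution of the particle system on (0, t'). Then for every t ∈ (0, t'): Σ_{i=0}^{N−1} |v^{i+1}_t − v^i_t| ≤ Σ_{i=0}^{N−1} |v₀^{i+1} − v₀^i| (with the conventions v⁰_t = v^N_t = 0 and v₀⁰ = v₀^N = 0); that is, the total variation of the piecewise constant approximate solution is nonincreasing in time. -/

import Mathlib

/-!
The total variation `Σ |v^{i+1} - v^i|` is the maximum, over sign patterns `σ ∈ {±1}^N`
(encoded by `s = {i | σ_i = 1}`), of the signed sums `Σ σ_i (v^{i+1} - v^i)`. Each signed sum is differentiable in time, and by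
summation by parts its derivative is `Σ_j (σ_{j-1} - σ_j) (v^j)'`. For a pattern realising the
maximum, `σ_{j-1} ≠ σ_j` only where `v^j` is a local extremum in `j`, and there the
minimum/maximum structure of `V` forces `(v^j)'` to have the sign that makes the term `≤ 0`.
So the right Dini derivative of the total variation is `≤ 0`, and it does not increase.
-/

open MeasureTheory Set Filter
open scoped ENNReal NNReal

/-- The velocity field `a(v) = f(v)/v`, extended by `a(0) = f'(0)`. -/
noncomputable def aF (f : ℝ → ℝ) (v : ℝ) : ℝ :=
  if v = 0 then deriv f 0 else f v / v

/-- The particle velocity `V(v_l, v_r)`: the minimum of `a` over `[v_l, v_r]` if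
`v_l ≤ v_r`, and the maximum of `a` over `[v_r, v_l]` if `v_r ≤ v_l`. -/
noncomputable def pV (f : ℝ → ℝ) (vl vr : ℝ) : ℝ :=
  if vl ≤ vr then sInf (aF f '' Set.Icc vl vr) else sSup (aF f '' Set.Icc vr vl)

/-- A solution of the particle system `ẋ^i = V(v^{i-1}, v^i)`,
`v^i_t = v₀^i Δx₀^i / Δx^i_t` on the time interval `[0, t')`, with the conventions
`v⁰ ≡ 0`, `v^N ≡ 0`. -/
structure IsParticleSol (f : ℝ → ℝ) (N : ℕ) (x₀ v₀ : ℕ → ℝ) (t' : ℝ)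
    (x v : ℕ → ℝ → ℝ) : Prop where
  init : ∀ i, 1 ≤ i → i ≤ N → x i 0 = x₀ i
  cont : ∀ i, 1 ≤ i → i ≤ N → ContinuousOn (x i) (Set.Ico 0 t')
  order : ∀ t ∈ Set.Ioo (0:ℝ) t', ∀ i, 1 ≤ i → i < N → x i t < x (i+1) t
  vzero : ∀ t, v 0 t = 0
  vN : ∀ t, v N t = 0
  ode : ∀ i, 1 ≤ i → i ≤ N → ∀ t ∈ Set.Ioo (0:ℝ) t',
    HasDerivAt (x i) (pV f (v (i-1) t) (v i t)) t
  mass : ∀ i, 1 ≤ i → i < N → ∀ t ∈ Set.Ico (0:ℝ) t',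
    v i t = v₀ i * (x₀ (i+1) - x₀ i) / (x (i+1) t - x i t)

open scoped Topology

section DiniDerivative

theorem frequently_slope_lt_of_active_hasDerivWithinAt {ι : Type*} {S : Finset ι}
    {h : ι → ℝ → ℝ} {h' : ι → ℝ} {g : ℝ → ℝ} {u r : ℝ}
    (hact : ∃ᶠ z in 𝓝[>] u, ∃ s ∈ S, h s z = g z) (hg : ContinuousWithinAt g (Ioi u) u)
    (hh : ∀ s ∈ S, HasDerivWithinAt (h s) (h' s) (Ioi u) u)
    (hr : ∀ s ∈ S, h s u = g u → h' s < r) :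
    ∃ᶠ z in 𝓝[>] u, slope g u z < r := by
  obtain ⟨s, hs, hfreq⟩ := S.frequently_exists.1 hact
  have hsu : h s u = g u :=
    tendsto_nhds_unique_of_frequently_eq (hh s hs).continuousWithinAt hg hfreq
  have hslope : ∀ᶠ z in 𝓝[>] u, slope (h s) u z < r :=
    ((hasDerivWithinAt_iff_tendsto_slope' (lt_irrefl u)).1 (hh s hs)).eventually_lt_const
      (hr s hs hsu)
  refine (hfreq.and_eventually hslope).mono fun z ⟨hz, hlt⟩ => ?_
  rwa [slope_def_field, ← hz, ← hsu, ← slope_def_field]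

theorem le_of_forall_frequently_slope_lt {g : ℝ → ℝ} {a b : ℝ} (hab : a ≤ b)
    (hg : ContinuousOn g (Icc a b))
    (hslope : ∀ u ∈ Ioo a b, ∀ r > 0, ∃ᶠ z in 𝓝[>] u, slope g u z < r) : g b ≤ g a := by
  rcases hab.eq_or_lt with rfl | hab
  · rfl
  have hle : ∀ c ∈ Ioc a b, g b ≤ g c := fun c hc =>
    image_le_of_liminf_slope_right_le_deriv_boundary (B := fun _ => g c) (B' := 0)
      (hg.mono (Icc_subset_Icc_left hc.1.le)) le_rfl continuousOn_const
      (fun _ _ => hasDerivWithinAt_const _ _ _)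
      (fun u hu r hr => hslope u ⟨hc.1.trans_le hu.1, hu.2⟩ r hr) ⟨hc.2, le_rfl⟩
  refine ContinuousWithinAt.closure_le (by simp [closure_Ioc hab.ne, hab.le])
    continuousWithinAt_const ((hg a (left_mem_Icc.2 hab.le)).mono Ioc_subset_Icc_self) hle

end DiniDerivative

section SignedVariation

noncomputable def totalVariation (n : ℕ) (w : ℕ → ℝ) : ℝ :=
  ∑ i ∈ Finset.range n, |w (i + 1) - w i|

noncomputable def signedVariation (n : ℕ) (s : Finset ℕ) (w : ℕ → ℝ) : ℝ :=
  ∑ i ∈ Finset.range n, (if i ∈ s then 1 else -1) * (w (i + 1) - w i)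

variable {n : ℕ} {s : Finset ℕ} {w : ℕ → ℝ}

theorem totalVariation_congr {w' : ℕ → ℝ} (h : ∀ i ≤ n, w i = w' i) :
    totalVariation n w = totalVariation n w' :=
  Finset.sum_congr rfl fun i hi => by
    rw [h i (Finset.mem_range.1 hi).le, h (i + 1) (Finset.mem_range.1 hi)]

theorem exists_signedVariation_eq_totalVariation (n : ℕ) (w : ℕ → ℝ) :
    ∃ s ∈ (Finset.range n).powerset, signedVariation n s w = totalVariation n w := by
  refine ⟨(Finset.range n).filter fun i => w i ≤ w (i + 1), by simp, ?_⟩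
  refine Finset.sum_congr rfl fun i hi => ?_
  by_cases hwi : w i ≤ w (i + 1)
  · simp [hi, hwi, abs_of_nonneg (sub_nonneg.2 hwi)]
  · simp [hwi, abs_of_neg (sub_neg.2 (not_le.1 hwi))]

theorem sign_mul_eq_abs_of_signedVariation_eq (hs : signedVariation n s w = totalVariation n w)
    {i : ℕ} (hi : i < n) :
    (if i ∈ s then 1 else -1) * (w (i + 1) - w i) = |w (i + 1) - w i| := by
  refine (Finset.sum_eq_sum_iff_of_le fun j _ => ?_).1 hs i (Finset.mem_range.2 hi)
  split_ifs
  · exact (one_mul _).trans_le (le_abs_self _)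
  · exact (neg_one_mul _).trans_le (neg_le_abs _)

theorem sum_mul_sub_eq_sum_sub_mul (σ D : ℕ → ℝ) (n : ℕ) :
    ∑ i ∈ Finset.range n, σ i * (D (i + 1) - D i) =
      ∑ i ∈ Finset.range n, (σ i - σ (i + 1)) * D (i + 1) + (σ n * D n - σ 0 * D 0) := by
  rw [← Finset.sum_range_sub (fun i => σ i * D i), ← Finset.sum_add_distrib]
  exact Finset.sum_congr rfl fun i _ => by ring

theorem signedVariation_nonpos_of_extrema {D : ℕ → ℝ} (hD0 : D 0 = 0) (hDn : D n = 0)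
    (hs : signedVariation n s w = totalVariation n w)
    (hmax : ∀ j, j + 1 < n → w j ≤ w (j + 1) → w (j + 2) ≤ w (j + 1) → D (j + 1) ≤ 0)
    (hmin : ∀ j, j + 1 < n → w (j + 1) ≤ w j → w (j + 1) ≤ w (j + 2) → 0 ≤ D (j + 1)) :
    signedVariation n s D ≤ 0 := by
  rw [signedVariation, sum_mul_sub_eq_sum_sub_mul, hD0, hDn]
  simp only [mul_zero, sub_zero, add_zero]
  refine Finset.sum_nonpos fun i hi => ?_
  rw [Finset.mem_range] at hi
  rcases (show i + 1 ≤ n from hi).eq_or_lt with hlast | hinner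
  · rw [hlast, hDn, mul_zero]
  have hl := sign_mul_eq_abs_of_signedVariation_eq hs hi
  have hr := sign_mul_eq_abs_of_signedVariation_eq hs hinner
  have := abs_nonneg (w (i + 1) - w i)
  have := abs_nonneg (w (i + 1 + 1) - w (i + 1))
  split_ifs at hl hr ⊢
  · simp
  · linarith [hmax i hinner (by linarith) (by linarith)]
  · linarith [hmin i hinner (by linarith) (by linarith)]
  · simp

theorem hasDerivAt_signedVariation {w : ℕ → ℝ → ℝ} {w' : ℕ → ℝ} {t : ℝ}
    (hw : ∀ i ≤ n, HasDerivAt (w i) (w' i) t) :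
    HasDerivAt (fun t => signedVariation n s (w · t)) (signedVariation n s w') t := by
  refine HasDerivAt.fun_sum fun i hi => ?_
  rw [Finset.mem_range] at hi
  exact ((hw (i + 1) hi).sub (hw i hi.le)).const_mul _

end SignedVariation

section Velocity

theorem abs_aF_le {f : ℝ → ℝ} {K : ℝ≥0} (hf : LipschitzWith K f) (hf0 : f 0 = 0) (w : ℝ) :
    |aF f w| ≤ K := by
  rcases eq_or_ne w 0 with rfl | hw
  · simpa [aF] using norm_deriv_le_of_lipschitz hf
  · rw [aF, if_neg hw, abs_div, div_le_iff₀ (abs_pos.2 hw)]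
    simpa [Real.dist_eq, hf0] using hf.dist_le_mul w 0

theorem isBounded_range_aF {f : ℝ → ℝ} {K : ℝ≥0} (hf : LipschitzWith K f) (hf0 : f 0 = 0) :
    Bornology.IsBounded (range (aF f)) :=
  isBounded_iff_forall_norm_le.2 ⟨K, by
    rintro _ ⟨w, rfl⟩
    exact abs_aF_le hf hf0 w⟩

variable {f : ℝ → ℝ}

theorem pV_le_aF {vl vr w : ℝ} (hb : BddBelow (range (aF f))) (hvl : vl ≤ vr)
    (hw : w ∈ Icc vl vr) : pV f vl vr ≤ aF f w := by
  rw [pV, if_pos hvl]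
  exact csInf_le (hb.mono (image_subset_range _ _)) (mem_image_of_mem _ hw)

theorem aF_le_pV {vl vr w : ℝ} (hb : BddAbove (range (aF f))) (hvr : vr ≤ vl)
    (hw : w ∈ Icc vr vl) : aF f w ≤ pV f vl vr := by
  rw [pV]
  split_ifs with hvl
  · obtain rfl : vl = vr := le_antisymm hvl hvr
    obtain rfl : w = vl := le_antisymm hw.2 hw.1
    simp
  · exact le_csSup (hb.mono (image_subset_range _ _)) (mem_image_of_mem _ hw)

theorem pV_le_pV_of_le_of_le {vl w vr : ℝ} (hb : Bornology.IsBounded (range (aF f)))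
    (hl : vl ≤ w) (hr : vr ≤ w) : pV f vl w ≤ pV f w vr :=
  (pV_le_aF hb.bddBelow hl ⟨hl, le_rfl⟩).trans (aF_le_pV hb.bddAbove hr ⟨hr, le_rfl⟩)

theorem pV_le_pV_of_ge_of_ge {vl w vr : ℝ} (hb : Bornology.IsBounded (range (aF f)))
    (hl : w ≤ vl) (hr : w ≤ vr) : pV f w vr ≤ pV f vl w :=
  (pV_le_aF hb.bddBelow hr ⟨le_rfl, hr⟩).trans (aF_le_pV hb.bddAbove hl ⟨le_rfl, hl⟩)

end Velocity

/-- Differentiating `v^j = v₀^j Δx₀^j / Δx^j` gives `-(v^j / Δx^j) (Δx^j)'`; in this form the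
rate also vanishes for `j = 0` and `j = N`, where `v^j ≡ 0`. -/
noncomputable def vDeriv (f : ℝ → ℝ) (x v : ℕ → ℝ → ℝ) (j : ℕ) (t : ℝ) : ℝ :=
  -(v j t / (x (j + 1) t - x j t)) * (pV f (v j t) (v (j + 1) t) - pV f (v (j - 1) t) (v j t))

section Extrema

variable {f : ℝ → ℝ} {x v : ℕ → ℝ → ℝ} {j : ℕ} {t : ℝ}

theorem vDeriv_nonpos_of_le_of_le (hb : Bornology.IsBounded (range (aF f)))
    (hρ : 0 ≤ v (j + 1) t / (x (j + 2) t - x (j + 1) t))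
    (hl : v j t ≤ v (j + 1) t) (hr : v (j + 2) t ≤ v (j + 1) t) :
    vDeriv f x v (j + 1) t ≤ 0 := by
  simpa only [vDeriv, Nat.add_sub_cancel, neg_mul, neg_nonpos] using
    mul_nonneg hρ (sub_nonneg.2 (pV_le_pV_of_le_of_le hb hl hr))

theorem vDeriv_nonneg_of_ge_of_ge (hb : Bornology.IsBounded (range (aF f)))
    (hρ : 0 ≤ v (j + 1) t / (x (j + 2) t - x (j + 1) t))
    (hl : v (j + 1) t ≤ v j t) (hr : v (j + 1) t ≤ v (j + 2) t) :
    0 ≤ vDeriv f x v (j + 1) t := by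
  simpa only [vDeriv, Nat.add_sub_cancel, neg_mul, neg_nonneg] using
    mul_nonpos_of_nonneg_of_nonpos hρ (sub_nonpos.2 (pV_le_pV_of_ge_of_ge hb hl hr))

end Extrema

namespace IsParticleSol

variable {f : ℝ → ℝ} {N : ℕ} {x₀ v₀ : ℕ → ℝ} {t' : ℝ} {x v : ℕ → ℝ → ℝ}

theorem gap_pos (hsol : IsParticleSol f N x₀ v₀ t' x v)
    (hx₀ : ∀ i, 1 ≤ i → i < N → x₀ i < x₀ (i + 1)) {i : ℕ} (h1 : 1 ≤ i) (h2 : i < N)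
    {t : ℝ} (ht : t ∈ Ico 0 t') : 0 < x (i + 1) t - x i t := by
  rcases ht.1.eq_or_lt with rfl | htpos
  · rw [hsol.init i h1 h2.le, hsol.init (i + 1) (by omega) h2, sub_pos]
    exact hx₀ i h1 h2
  · exact sub_pos.2 (hsol.order t ⟨htpos, ht.2⟩ i h1 h2)

theorem v_nonneg (hsol : IsParticleSol f N x₀ v₀ t' x v)
    (hx₀ : ∀ i, 1 ≤ i → i < N → x₀ i < x₀ (i + 1)) (hv₀ : ∀ i, 1 ≤ i → i < N → 0 ≤ v₀ i)
    {i : ℕ} (h1 : 1 ≤ i) (h2 : i < N) {t : ℝ} (ht : t ∈ Ico 0 t') : 0 ≤ v i t := by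
  rw [hsol.mass i h1 h2 t ht]
  exact div_nonneg (mul_nonneg (hv₀ i h1 h2) (sub_pos.2 (hx₀ i h1 h2)).le)
    (hsol.gap_pos hx₀ h1 h2 ht).le

theorem v_zero (hsol : IsParticleSol f N x₀ v₀ t' x v)
    (hx₀ : ∀ i, 1 ≤ i → i < N → x₀ i < x₀ (i + 1)) (hv₀0 : v₀ 0 = 0) (hv₀N : v₀ N = 0)
    (ht' : 0 < t') {i : ℕ} (hi : i ≤ N) : v i 0 = v₀ i := by
  rcases Nat.eq_zero_or_pos i with rfl | h1
  · rw [hsol.vzero, hv₀0]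
  rcases hi.eq_or_lt with rfl | h2
  · rw [hsol.vN, hv₀N]
  rw [hsol.mass i h1 h2 0 ⟨le_rfl, ht'⟩, hsol.init i h1 h2.le,
    hsol.init (i + 1) (Nat.le_add_left 1 _) h2, mul_div_assoc,
    div_self (sub_pos.2 (hx₀ i h1 h2)).ne', mul_one]

theorem continuousOn_v (hsol : IsParticleSol f N x₀ v₀ t' x v)
    (hx₀ : ∀ i, 1 ≤ i → i < N → x₀ i < x₀ (i + 1)) {i : ℕ} (hi : i ≤ N) :
    ContinuousOn (v i) (Ico 0 t') := by
  rcases Nat.eq_zero_or_pos i with rfl | h1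
  · exact continuousOn_const.congr fun t _ => hsol.vzero t
  rcases hi.eq_or_lt with rfl | h2
  · exact continuousOn_const.congr fun t _ => hsol.vN t
  have hgap := (hsol.cont (i + 1) (Nat.le_add_left 1 _) h2).sub (hsol.cont i h1 h2.le)
  exact (continuousOn_const.div hgap fun t ht => (hsol.gap_pos hx₀ h1 h2 ht).ne').congr
    fun t ht => hsol.mass i h1 h2 t ht

theorem continuousOn_totalVariation (hsol : IsParticleSol f N x₀ v₀ t' x v)
    (hx₀ : ∀ i, 1 ≤ i → i < N → x₀ i < x₀ (i + 1)) :
    ContinuousOn (fun t => totalVariation N (v · t)) (Ico 0 t') :=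
  continuousOn_finsetSum _ fun _ hi =>
    ((hsol.continuousOn_v hx₀ (Finset.mem_range.1 hi)).sub
      (hsol.continuousOn_v hx₀ (Finset.mem_range.1 hi).le)).abs

theorem hasDerivAt_v (hsol : IsParticleSol f N x₀ v₀ t' x v)
    (hx₀ : ∀ i, 1 ≤ i → i < N → x₀ i < x₀ (i + 1)) {j : ℕ} (hj : j ≤ N) {t : ℝ}
    (ht : t ∈ Ioo 0 t') : HasDerivAt (v j) (vDeriv f x v j t) t := by
  rcases Nat.eq_zero_or_pos j with rfl | h1
  · simpa [vDeriv, hsol.vzero] using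
      (hasDerivAt_const t (0 : ℝ)).congr_of_eventuallyEq (.of_forall hsol.vzero)
  rcases hj.eq_or_lt with rfl | h2
  · simpa [vDeriv, hsol.vN] using
      (hasDerivAt_const t (0 : ℝ)).congr_of_eventuallyEq (.of_forall hsol.vN)
  have hgap := hsol.gap_pos hx₀ h1 h2 (Ioo_subset_Ico_self ht)
  have hv : v j =ᶠ[𝓝 t] fun u => v₀ j * (x₀ (j + 1) - x₀ j) / (x (j + 1) u - x j u) :=
    eventually_of_mem (isOpen_Ioo.mem_nhds ht) fun u hu =>
      hsol.mass j h1 h2 u (Ioo_subset_Ico_self hu)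
  have hdx := (hsol.ode (j + 1) (Nat.le_add_left 1 _) h2 t ht).sub (hsol.ode j h1 h2.le t ht)
  refine ((hasDerivAt_const t _).div hdx hgap.ne').congr_of_eventuallyEq hv |>.congr_deriv ?_
  simp only [vDeriv, Nat.add_sub_cancel, Pi.sub_apply]
  generalize pV f (v j t) (v (j + 1) t) - pV f (v (j - 1) t) (v j t) = d
  rw [hsol.mass j h1 h2 t (Ioo_subset_Ico_self ht)]
  field_simp
  ring

theorem frequently_slope_totalVariation_lt (hsol : IsParticleSol f N x₀ v₀ t' x v)
    (hb : Bornology.IsBounded (range (aF f))) (hx₀ : ∀ i, 1 ≤ i → i < N → x₀ i < x₀ (i + 1))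
    (hv₀ : ∀ i, 1 ≤ i → i < N → 0 ≤ v₀ i) {u : ℝ} (hu : u ∈ Ioo 0 t') {r : ℝ} (hr : 0 < r) :
    ∃ᶠ z in 𝓝[>] u, slope (fun t => totalVariation N (v · t)) u z < r := by
  have hρ : ∀ j, j + 1 < N → 0 ≤ v (j + 1) u / (x (j + 2) u - x (j + 1) u) := fun j hj =>
    div_nonneg (hsol.v_nonneg hx₀ hv₀ j.succ_pos hj (Ioo_subset_Ico_self hu))
      (hsol.gap_pos hx₀ j.succ_pos hj (Ioo_subset_Ico_self hu)).le
  refine frequently_slope_lt_of_active_hasDerivWithinAt (S := (Finset.range N).powerset)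
    (h' := fun s => signedVariation N s (vDeriv f x v · u))
    (Frequently.of_forall fun z => exists_signedVariation_eq_totalVariation N (v · z))
    ((hsol.continuousOn_totalVariation hx₀).continuousAt
      (Ico_mem_nhds hu.1 hu.2)).continuousWithinAt
    (fun s _ => (hasDerivAt_signedVariation fun i hi =>
      hsol.hasDerivAt_v hx₀ hi hu).hasDerivWithinAt) fun s _ hs => ?_
  refine (signedVariation_nonpos_of_extrema (by simp [vDeriv, hsol.vzero])
    (by simp [vDeriv, hsol.vN]) hs (fun j hj hl hr => ?_) (fun j hj hl hr => ?_)).trans_lt hr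
  · exact vDeriv_nonpos_of_le_of_le hb (hρ j hj) hl hr
  · exact vDeriv_nonneg_of_ge_of_ge hb (hρ j hj) hl hr

end IsParticleSol

theorem diminishing_total_variation_general (f : ℝ → ℝ) (K : ℝ≥0) (hf : LipschitzWith K f)
    (hf0 : f 0 = 0)
    (N : ℕ) (x₀ v₀ : ℕ → ℝ)
    (hx₀ : ∀ i, 1 ≤ i → i < N → x₀ i < x₀ (i+1))
    (hv₀nn : ∀ i, 1 ≤ i → i < N → 0 ≤ v₀ i)
    (hv₀0 : v₀ 0 = 0) (hv₀N : v₀ N = 0)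
    (t' : ℝ) (x v : ℕ → ℝ → ℝ)
    (hsol : IsParticleSol f N x₀ v₀ t' x v) :
    ∀ t ∈ Set.Ioo (0:ℝ) t',
      ∑ i ∈ Finset.range N, |v (i+1) t - v i t| ≤
        ∑ i ∈ Finset.range N, |v₀ (i+1) - v₀ i| := by
  intro t ht
  calc totalVariation N (v · t) ≤ totalVariation N (v · 0) :=
        le_of_forall_frequently_slope_lt ht.1.le
          ((hsol.continuousOn_totalVariation hx₀).mono (Icc_subset_Ico_right ht.2))
          fun u hu _ hr => hsol.frequently_slope_totalVariation_lt (isBounded_range_aF hf hf0)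
            hx₀ hv₀nn ⟨hu.1, hu.2.trans ht.2⟩ hr
    _ = totalVariation N v₀ :=
        totalVariation_congr fun i hi => hsol.v_zero hx₀ hv₀0 hv₀N (ht.1.trans ht.2) hi

/-- **Diminishing total variation.** For a solution of the particle system on
`(0, t')`, the total variation `Σ_{i=0}^{N−1} |v^{i+1}_t − v^i_t|` of the piecewise constant
approximate solution is nonincreasing in time. -/
theorem diminishing_total_variation (f : ℝ → ℝ) (K : ℝ≥0) (hf : LipschitzWith K f)
    (hf0 : f 0 = 0) (hfd : DifferentiableAt ℝ f 0)
    (N : ℕ) (hN : 2 ≤ N) (x₀ v₀ : ℕ → ℝ)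
    (hx₀ : ∀ i, 1 ≤ i → i < N → x₀ i < x₀ (i+1))
    (hv₀nn : ∀ i, 1 ≤ i → i < N → 0 ≤ v₀ i)
    (hv₀0 : v₀ 0 = 0) (hv₀N : v₀ N = 0)
    (t' : ℝ) (ht' : 0 < t') (x v : ℕ → ℝ → ℝ)
    (hsol : IsParticleSol f N x₀ v₀ t' x v) :
    ∀ t ∈ Set.Ioo (0:ℝ) t',
      ∑ i ∈ Finset.range N, |v (i+1) t - v i t| ≤
        ∑ i ∈ Finset.range N, |v₀ (i+1) - v₀ i| :=
  diminishing_total_variation_general f K hf hf0 N x₀ v₀ hx₀ hv₀nn hv₀0 hv₀N t' x v hsol
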